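/- Let r ≥ 2 be an integer, let a > 0 and b be real numbers, and let L, E₁, …, E_r, K ∈ V satisfy: L ∈ Pos with L² = a; E_i² = −1 and L·E_i = 0 for all i; E_i·E_j = 0 for all i ≠ j; K·L = b; and K·E_i = −1 for all i. If b + √(a(r−1)) > 0, then the vector α := L − √(a/(r−1)) • (E₁ + ⋯ + E_{r−1}) satisfies α ∈ Pos̄, α² = 0, α·E_r = 0, α·L = a > 0 and α·K = b + √(a(r−1)) > 0. -/
import Mathlib


/-- The Minkowski bilinear form on `Fin ρ → ℝ`:
`B(x,y) = x 0 * y 0 − ∑_{i ≠ 0} x i * y i`, of signature `(1, ρ−1)`. -/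
noncomputable def Bform {ρ : ℕ} [NeZero ρ] (x y : Fin ρ → ℝ) : ℝ :=
  x 0 * y 0 - ∑ i ∈ Finset.univ.erase (0 : Fin ρ), x i * y i

/-- The closed positive cone `Pos̄ = {x : x² ≥ 0 ∧ x 0 ≥ 0}`. -/
def PosBar (ρ : ℕ) [NeZero ρ] : Set (Fin ρ → ℝ) :=
  {x | 0 ≤ Bform x x ∧ 0 ≤ x 0}

/-- The open positive cone `Pos = {x : x² > 0 ∧ x 0 > 0}`. -/
def PosOpen (ρ : ℕ) [NeZero ρ] : Set (Fin ρ → ℝ) :=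
  {x | 0 < Bform x x ∧ 0 < x 0}

/-- The ray `R(v) = {t • v : t ≥ 0}` spanned by `v`. -/
def Ray {ρ : ℕ} (v : Fin ρ → ℝ) : Set (Fin ρ → ℝ) :=
  {w | ∃ t : ℝ, 0 ≤ t ∧ w = t • v}

lemma Bform_comm {ρ : ℕ} [NeZero ρ] (x y : Fin ρ → ℝ) : Bform x y = Bform y x := by
  simp [Bform, mul_comm]

lemma Bform_sub_left {ρ : ℕ} [NeZero ρ] (x y z : Fin ρ → ℝ) :
    Bform (x - y) z = Bform x z - Bform y z := by
  simp only [Bform, Pi.sub_apply, sub_mul, Finset.sum_sub_distrib]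
  ring

lemma Bform_smul_left {ρ : ℕ} [NeZero ρ] (s : ℝ) (x y : Fin ρ → ℝ) :
    Bform (s • x) y = s * Bform x y := by
  simp only [Bform, Pi.smul_apply, smul_eq_mul, mul_sub, Finset.mul_sum]
  congr 1
  · ring
  · exact Finset.sum_congr rfl fun i _ => by ring

lemma Bform_add_left {ρ : ℕ} [NeZero ρ] (x y z : Fin ρ → ℝ) :
    Bform (x + y) z = Bform x z + Bform y z := by
  simp only [Bform, Pi.add_apply, add_mul, Finset.sum_add_distrib]
  ring

lemma Bform_sum_left {ρ : ℕ} [NeZero ρ] {ι : Type*} (s : Finset ι) (f : ι → Fin ρ → ℝ)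
    (y : Fin ρ → ℝ) : Bform (∑ i ∈ s, f i) y = ∑ i ∈ s, Bform (f i) y := by
  induction s using Finset.cons_induction with
  | empty => simp [Bform]
  | cons i s hi ih => rw [Finset.sum_cons, Finset.sum_cons, Bform_add_left, ih]

/-- Proposition 6.2 (prop:uni), abstract core. -/
theorem stmt16 {ρ : ℕ} [NeZero ρ] (r : ℕ) (hr : 2 ≤ r) (a b : ℝ) (ha : 0 < a)
    (L K : Fin ρ → ℝ) (E : ℕ → Fin ρ → ℝ)
    (hL : L ∈ PosOpen ρ) (hLa : Bform L L = a)
    (hE2 : ∀ i < r, Bform (E i) (E i) = -1)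
    (hLE : ∀ i < r, Bform L (E i) = 0)
    (hEE : ∀ i < r, ∀ j < r, i ≠ j → Bform (E i) (E j) = 0)
    (hKL : Bform K L = b)
    (hKE : ∀ i < r, Bform K (E i) = -1)
    (hb : 0 < b + Real.sqrt (a * ((r : ℝ) - 1)))
    (α : Fin ρ → ℝ)
    (hα : α = L - Real.sqrt (a / ((r : ℝ) - 1)) • ∑ i ∈ Finset.range (r - 1), E i) :
    α ∈ PosBar ρ ∧ Bform α α = 0 ∧ Bform α (E (r - 1)) = 0 ∧
      Bform α L = a ∧ 0 < Bform α L ∧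
      Bform α K = b + Real.sqrt (a * ((r : ℝ) - 1)) ∧ 0 < Bform α K := by
  have hr1 : (0:ℝ) < (r:ℝ) - 1 := by
    have : (2:ℝ) ≤ (r:ℝ) := by exact_mod_cast hr
    linarith
  set c := Real.sqrt (a / ((r : ℝ) - 1)) with hc
  have hc0 : 0 ≤ c := Real.sqrt_nonneg _
  have hc2 : c * c = a / ((r:ℝ) - 1) :=
    Real.mul_self_sqrt (le_of_lt (div_pos ha hr1))
  have hcard : ((r - 1 : ℕ) : ℝ) = (r:ℝ) - 1 := by
    have : 1 ≤ r := by omega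
    push_cast [Nat.cast_sub this]
    ring
  -- B(α, v) formula
  have key : ∀ v, Bform α v = Bform L v - c * ∑ i ∈ Finset.range (r - 1), Bform (E i) v := by
    intro v
    rw [hα, Bform_sub_left, Bform_smul_left, Bform_sum_left]
  have hlt : ∀ i ∈ Finset.range (r - 1), i < r := by
    intro i hi; have := Finset.mem_range.mp hi; omega
  -- α · L = a
  have hαL : Bform α L = a := by
    rw [key, hLa]
    have : ∑ i ∈ Finset.range (r - 1), Bform (E i) L = 0 := by
      refine Finset.sum_eq_zero fun i hi => ?_
      rw [Bform_comm]; exact hLE i (hlt i hi)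
    rw [this]; ring
  -- α · E (r-1) = 0
  have hαE : Bform α (E (r - 1)) = 0 := by
    rw [key, hLE (r - 1) (by omega)]
    have : ∑ i ∈ Finset.range (r - 1), Bform (E i) (E (r - 1)) = 0 := by
      refine Finset.sum_eq_zero fun i hi => ?_
      exact hEE i (hlt i hi) (r - 1) (by omega) (by have := Finset.mem_range.mp hi; omega)
    rw [this]; ring
  -- √(a(r-1)) = c * (r-1)
  have hca : c * c * ((r:ℝ) - 1) = a := by rw [hc2]; field_simp
  have hsq : c * ((r:ℝ) - 1) = Real.sqrt (a * ((r:ℝ) - 1)) := by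
    rw [show a * ((r:ℝ) - 1) = (c * ((r:ℝ) - 1)) ^ 2 by nlinarith [hca]]
    exact (Real.sqrt_sq (mul_nonneg hc0 hr1.le)).symm
  -- α · K
  have hαK : Bform α K = b + Real.sqrt (a * ((r:ℝ) - 1)) := by
    rw [key, Bform_comm L K, hKL]
    have hsumK : ∑ i ∈ Finset.range (r - 1), Bform (E i) K = -((r:ℝ) - 1) := by
      have h : ∀ i ∈ Finset.range (r - 1), Bform (E i) K = -1 :=
        fun i hi => (Bform_comm (E i) K).trans (hKE i (hlt i hi))
      rw [Finset.sum_congr rfl h, Finset.sum_const, Finset.card_range, nsmul_eq_mul, hcard]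
      ring
    rw [hsumK, ← hsq]; ring
  -- α² = 0
  have hαα : Bform α α = 0 := by
    have hform : Bform α α = Bform α L - c * ∑ i ∈ Finset.range (r - 1), Bform α (E i) := by
      conv_lhs => rw [show Bform α α = Bform α (L - c • ∑ i ∈ Finset.range (r-1), E i) by
        rw [← hα]]
      rw [Bform_comm, Bform_sub_left, Bform_smul_left, Bform_sum_left, Bform_comm L α]
      congr 2
      exact Finset.sum_congr rfl fun i _ => Bform_comm _ _
    rw [hform, hαL]
    have hsum : ∀ j ∈ Finset.range (r - 1), Bform α (E j) = c := by
      intro j hj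
      have hjr := hlt j hj
      rw [key, hLE j hjr]
      have hS : ∑ i ∈ Finset.range (r - 1), Bform (E i) (E j) = -1 := by
        rw [← Finset.add_sum_erase _ _ hj, hE2 j hjr]
        have h0 : ∑ i ∈ (Finset.range (r-1)).erase j, Bform (E i) (E j) = 0 := by
          refine Finset.sum_eq_zero fun i hi => ?_
          have hij := Finset.mem_erase.mp hi
          exact hEE i (hlt i hij.2) j hjr hij.1
        rw [h0]; ring
      rw [hS]; ring
    rw [Finset.sum_congr rfl hsum, Finset.sum_const, Finset.card_range, nsmul_eq_mul, hcard]
    linear_combination (-1 : ℝ) * hca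
  -- α 0 ≥ 0 via Cauchy–Schwarz
  obtain ⟨hL2, hL0⟩ := hL
  have hα0 : 0 ≤ α 0 := by
    set s := Finset.univ.erase (0 : Fin ρ) with hs
    have h1 : α 0 * α 0 = ∑ i ∈ s, α i * α i := by
      have := hαα; simp only [Bform] at this; linarith
    have h2 : α 0 * L 0 - ∑ i ∈ s, α i * L i = a := by
      have := hαL; simp only [Bform] at this; linarith
    have h3 : ∑ i ∈ s, L i * L i = L 0 * L 0 - a := by
      have := hLa; simp only [Bform] at this; linarith
    have hCS := Finset.sum_mul_sq_le_sq_mul_sq s (fun i => α i) (fun i => L i)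
    have e1 : ∑ i ∈ s, α i ^ 2 = α 0 * α 0 := by
      rw [h1]; exact Finset.sum_congr rfl fun i _ => by ring
    have e2 : ∑ i ∈ s, L i ^ 2 = L 0 * L 0 - a := by
      rw [← h3]; exact Finset.sum_congr rfl fun i _ => by ring
    rw [e1, e2] at hCS
    have hS : ∑ i ∈ s, α i * L i = α 0 * L 0 - a := by linarith
    rw [hS] at hCS
    by_contra hneg
    push_neg at hneg
    nlinarith [hCS, mul_pos ha ha, mul_pos (mul_pos ha (neg_pos.2 hneg)) hL0,
      mul_nonneg ha.le (mul_self_nonneg (α 0))]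
  refine ⟨⟨hαα.ge, hα0⟩, hαα, hαE, hαL, hαL ▸ ha, hαK, hαK ▸ hb⟩
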